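/- Let n = p_1 p_2 ⋯ p_k be a product of k ≥ 2 distinct primes. Let x and y be proper divisors of n with 1 < x, y < n (so x is a product of i distinct primes and y is a product of j distinct primes with 1 ≤ i, j ≤ k-1). Then the vertices ⟨x⟩ and ⟨y⟩ of the essential ideal graph E_{Z_n} are adjacent if and only if gcd(x, y) = 1. -/

import Mathlib

open Polynomial

/-- An ideal `I` of a commutative ring is *essential* if it has nonzero intersection
with every nonzero ideal. -/
def IsEssentialIdeal {R : Type*} [CommRing R] (I : Ideal R) : Prop :=
  ∀ J : Ideal R, J ≠ ⊥ → I ⊓ J ≠ ⊥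

/-- The essential ideal graph of a commutative ring `R`: its vertices are the nonzero
proper ideals of `R`, and two distinct vertices `I`, `K` are adjacent iff `I + K` is an
essential ideal of `R`. -/
def essentialIdealGraph (R : Type*) [CommRing R] :
    SimpleGraph {I : Ideal R // I ≠ ⊥ ∧ I ≠ ⊤} where
  Adj I K := I ≠ K ∧ IsEssentialIdeal (I.1 ⊔ K.1)
  symm := by
    refine ⟨?_⟩
    rintro I K ⟨hne, hess⟩
    exact ⟨hne.symm, by rwa [sup_comm]⟩
  loopless := ⟨fun I h => h.1 rfl⟩

/-- The vertex set of the essential ideal graph of `ZMod n`. -/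
abbrev EssVert (n : ℕ) : Type := {I : Ideal (ZMod n) // I ≠ ⊥ ∧ I ≠ ⊤}

lemma mem_span_nat_iff (n d : ℕ) [NeZero n] (hd : d ∣ n) (c : ZMod n) :
    c ∈ Ideal.span {(d : ZMod n)} ↔ d ∣ c.val := by
  rw [Ideal.mem_span_singleton]
  constructor
  · rintro ⟨a, rfl⟩
    rw [ZMod.val_mul, Nat.dvd_mod_iff hd, ZMod.val_natCast]
    exact Dvd.dvd.mul_right ((Nat.dvd_mod_iff hd).mpr dvd_rfl) _
  · rintro ⟨e, he⟩
    refine ⟨(e : ZMod n), ?_⟩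
    conv_lhs => rw [← ZMod.natCast_rightInverse (n := n) c, he]
    push_cast
    ring

lemma span_sup_span (n x y : ℕ) :
    Ideal.span {(x : ZMod n)} ⊔ Ideal.span {(y : ZMod n)}
      = Ideal.span {((Nat.gcd x y : ℕ) : ZMod n)} := by
  apply le_antisymm
  · apply sup_le <;>
      rw [Ideal.span_singleton_le_span_singleton]
    · exact_mod_cast (Nat.cast_dvd_cast (α := ZMod n) (Nat.gcd_dvd_left x y))
    · exact_mod_cast (Nat.cast_dvd_cast (α := ZMod n) (Nat.gcd_dvd_right x y))
  · rw [Ideal.span_le, Set.singleton_subset_iff]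
    have hg : ((Nat.gcd x y : ℕ) : ZMod n)
        = (x : ZMod n) * ((Nat.gcdA x y : ℤ) : ZMod n)
          + (y : ZMod n) * ((Nat.gcdB x y : ℤ) : ZMod n) := by
      calc ((Nat.gcd x y : ℕ) : ZMod n) = ((Nat.gcd x y : ℤ) : ZMod n) := by push_cast; ring
        _ = ((x * Nat.gcdA x y + y * Nat.gcdB x y : ℤ) : ZMod n) := by
              rw [← Nat.gcd_eq_gcd_ab]
        _ = _ := by push_cast; ring
    rw [SetLike.mem_coe, hg]
    exact Submodule.add_mem _
      (Ideal.mem_sup_left (Ideal.mul_mem_right _ _ (Ideal.subset_span rfl)))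
      (Ideal.mem_sup_right (Ideal.mul_mem_right _ _ (Ideal.subset_span rfl)))


/-- Let `n = p 0 * p 1 * ⋯ * p (k-1)` be a product of `k ≥ 2` distinct primes, and let
`x, y` be divisors of `n` with `1 < x < n` and `1 < y < n`.  Then the vertices `⟨x⟩` and
`⟨y⟩` of the essential ideal graph of `ZMod n` are adjacent if and only if
`gcd(x, y) = 1`. -/
theorem adj_iff_gcd_eq_one_of_squarefree (k : ℕ) (hk : 2 ≤ k) (p : Fin k → ℕ)
    (hp : ∀ i, (p i).Prime) (hinj : Function.Injective p)
    (n : ℕ) (hn : n = ∏ i, p i)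
    (x y : ℕ) (hxn : x ∣ n) (hyn : y ∣ n)
    (hx1 : 1 < x) (hxlt : x < n) (hy1 : 1 < y) (hylt : y < n)
    (I K : EssVert n)
    (hI : I.1 = Ideal.span {((x : ℕ) : ZMod n)})
    (hK : K.1 = Ideal.span {((y : ℕ) : ZMod n)}) :
    (essentialIdealGraph (ZMod n)).Adj I K ↔ Nat.gcd x y = 1 := by
  show (I ≠ K ∧ IsEssentialIdeal (I.1 ⊔ K.1)) ↔ _
  unfold IsEssentialIdeal
  have hn2 : 1 < n := lt_trans hx1 hxlt
  haveI : NeZero n := ⟨by omega⟩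
  have hsup : I.1 ⊔ K.1 = Ideal.span {((Nat.gcd x y : ℕ) : ZMod n)} := by
    rw [hI, hK, span_sup_span]
  set g := Nat.gcd x y with hgdef
  have hgx : g ∣ x := Nat.gcd_dvd_left x y
  have hgn : g ∣ n := hgx.trans hxn
  constructor
  · rintro ⟨-, hess⟩
    by_contra hg1
    -- g ≥ 2, pick a prime divisor q of g, q = p i
    have hgpos : 0 < g := Nat.gcd_pos_of_pos_left y (by omega)
    have hg2 : 2 ≤ g := by omega
    obtain ⟨q, hq, hqg⟩ := Nat.exists_prime_and_dvd (by omega : g ≠ 1)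
    have hqn : q ∣ n := hqg.trans hgn
    obtain ⟨i, -, hqi⟩ := hq.prime.exists_mem_finset_dvd (hn ▸ hqn)
    have hqe : q = p i := ((Nat.prime_dvd_prime_iff_eq hq (hp i)).mp hqi)
    -- m = product of the other primes
    set m := ∏ j ∈ Finset.univ.erase i, p j with hm
    have hnm : n = p i * m := by
      rw [hn, ← Finset.mul_prod_erase Finset.univ p (Finset.mem_univ i)]
    have hcop : Nat.Coprime (p i) m := by
      apply Nat.Coprime.prod_right
      intro j hj
      exact (Nat.coprime_primes (hp i) (hp j)).mpr
        (fun h => (Finset.mem_erase.mp hj).1 (hinj h).symm)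
    have hmpos : 0 < m := Finset.prod_pos fun j _ => (hp j).pos
    have hmlt : m < n := by
      rw [hnm]
      exact lt_of_lt_of_le (by omega) (Nat.mul_le_mul_right m (hp i).two_le)
    have hJ : Ideal.span {((m : ℕ) : ZMod n)} ≠ ⊥ := by
      simp only [ne_eq, Ideal.span_singleton_eq_bot]
      intro h0
      rw [ZMod.natCast_eq_zero_iff] at h0
      exact absurd (Nat.le_of_dvd hmpos h0) (by omega)
    apply hess _ hJ
    rw [hsup, eq_bot_iff]
    rintro c hc
    obtain ⟨hc1, hc2⟩ := Submodule.mem_inf.mp hc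
    rw [mem_span_nat_iff n g hgn] at hc1
    rw [mem_span_nat_iff n m (Dvd.intro_left _ hnm.symm)] at hc2
    have hpc : p i ∣ c.val := (hqe ▸ hqg).trans hc1
    have hnc : n ∣ c.val := by
      have hv : p i * m ∣ c.val := hcop.mul_dvd_of_dvd_of_dvd hpc hc2
      rwa [← hnm] at hv
    have : c.val = 0 := Nat.eq_zero_of_dvd_of_lt hnc (ZMod.val_lt c)
    simpa [ZMod.val_eq_zero] using this
  · intro hg
    constructor
    · intro hIK
      have h1 : Ideal.span {((x : ℕ) : ZMod n)} = Ideal.span {((y : ℕ) : ZMod n)} := by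
        rw [← hI, ← hK, hIK]
      have hx_mem : ((x : ℕ) : ZMod n) ∈ Ideal.span {((y : ℕ) : ZMod n)} := by
        rw [← h1]; exact Ideal.subset_span rfl
      have hy_mem : ((y : ℕ) : ZMod n) ∈ Ideal.span {((x : ℕ) : ZMod n)} := by
        rw [h1]; exact Ideal.subset_span rfl
      rw [mem_span_nat_iff n y hyn, ZMod.val_natCast, Nat.mod_eq_of_lt hxlt] at hx_mem
      rw [mem_span_nat_iff n x hxn, ZMod.val_natCast, Nat.mod_eq_of_lt hylt] at hy_mem
      have : x = y := Nat.dvd_antisymm hy_mem hx_mem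
      rw [hgdef, this, Nat.gcd_self] at hg
      omega
    · intro J hJ
      rw [hsup, hg]
      simp only [Nat.cast_one, Ideal.span_singleton_one, top_inf_eq]
      exact hJ
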